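/- For any graph G, the hull number of the oriented graph G→C4 is at most the hull number of G; in fact every hull set of G is a hull set of G→C4. -/

import Mathlib

/-!
A walk `a₀ a₁ … aₙ` of `G` lifts to the directed walk `a₀ v_{a₀,a₁} a₁ … v_{aₙ₋₁,aₙ} aₙ` of `G→C4`,
and every directed walk between original vertices arises this way, with length `2n`. Hence geodesics
of `G` lift to geodesics of `G→C4`, and the original vertices of a convex set of `G→C4` form a convex
set of `G`. If that convex set contains a hull set of `G`, it therefore contains every original
vertex, and then also every `v_{i,j}`, which lies on the geodesic `v_i v_{i,j} v_j`.
-/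

variable {V : Type*}

/-- A directed walk from `u` to `v` given as its list of vertices. -/
def DiwalkFrom (A : V → V → Prop) (u v : V) (l : List V) : Prop :=
  l.Chain' A ∧ l.head? = some u ∧ l.getLast? = some v

/-- A `(u,v)`-geodesic: a directed walk of minimum length (hence a shortest directed path). -/
def IsGeodesic (A : V → V → Prop) (u v : V) (l : List V) : Prop :=
  DiwalkFrom A u v l ∧ ∀ l', DiwalkFrom A u v l' → l.length ≤ l'.length

/-- The interval `I(S)`: `S` together with all vertices on geodesics between members of `S`. -/
def geoInterval (A : V → V → Prop) (S : Set V) : Set V :=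
  S ∪ {w | ∃ u ∈ S, ∃ v ∈ S, ∃ l, IsGeodesic A u v l ∧ w ∈ l}

def GeoConvex (A : V → V → Prop) (S : Set V) : Prop := geoInterval A S = S

/-- The geodesic convex hull of `S`. -/
def geoHull (A : V → V → Prop) (S : Set V) : Set V := ⋂₀ {T | S ⊆ T ∧ GeoConvex A T}

def IsHullSet (A : V → V → Prop) (S : Set V) : Prop := geoHull A S = Set.univ

def IsGeodeticSet (A : V → V → Prop) (S : Set V) : Prop := geoInterval A S = Set.univ

noncomputable def hullNumber (A : V → V → Prop) : ℕ :=
  sInf {n | ∃ S : Set V, S.Finite ∧ S.ncard = n ∧ IsHullSet A S}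

noncomputable def geodeticNumber (A : V → V → Prop) : ℕ :=
  sInf {n | ∃ S : Set V, S.Finite ∧ S.ncard = n ∧ IsGeodeticSet A S}

def IsSource (A : V → V → Prop) (v : V) : Prop := ∀ u, ¬ A u v
def IsSink (A : V → V → Prop) (v : V) : Prop := ∀ w, ¬ A v w
def IsTransitiveVtx (A : V → V → Prop) (v : V) : Prop :=
  (∃ u, A u v) ∧ (∃ w, A v w) ∧ ∀ u w, A u v → A v w → A u w
def IsExtremeVtx (A : V → V → Prop) (v : V) : Prop :=
  IsSource A v ∨ IsSink A v ∨ IsTransitiveVtx A v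

/-- An oriented graph: an asymmetric (hence irreflexive) arc relation. -/
def Oriented (A : V → V → Prop) : Prop := ∀ u v, A u v → ¬ A v u

/-- Directed distance, `⊤` if there is no directed walk. -/
noncomputable def ddist (A : V → V → Prop) (u v : V) : ℕ∞ :=
  sInf {n : ℕ∞ | ∃ l, DiwalkFrom A u v l ∧ (l.length : ℕ∞) = n + 1}


/-- Vertex set of `G→C4`: original vertices plus one vertex `v_{i,j}` per ordered adjacent pair. -/
abbrev oC4V {V : Type*} (G : SimpleGraph V) := V ⊕ {p : V × V // G.Adj p.1 p.2}

/-- `G→C4`: each edge `v_i v_j` of `G` replaced by the directed 4-cycle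
`(v_i, v_{i,j}, v_j, v_{j,i})`. -/
def oC4 {V : Type*} (G : SimpleGraph V) : oC4V G → oC4V G → Prop
  | Sum.inl i, Sum.inr p => i = p.1.1
  | Sum.inr p, Sum.inl j => j = p.1.2
  | _, _ => False

open Set

section Geodesic

variable {A : V → V → Prop}

lemma diwalkFrom_iff {u v : V} {l : List V} :
    DiwalkFrom A u v l ↔ l.IsChain A ∧ l.head? = some u ∧ l.getLast? = some v :=
  Iff.rfl

lemma diwalkFrom_nil {u v : V} : ¬ DiwalkFrom A u v [] := by
  simp [diwalkFrom_iff]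

lemma diwalkFrom_singleton {u v a : V} : DiwalkFrom A u v [a] ↔ a = u ∧ a = v := by
  simp [diwalkFrom_iff, eq_comm]

lemma diwalkFrom_cons_cons {u v a b : V} {t : List V} :
    DiwalkFrom A u v (a :: b :: t) ↔ a = u ∧ A a b ∧ DiwalkFrom A b v (b :: t) := by
  simp only [diwalkFrom_iff, List.isChain_cons_cons, List.head?_cons, Option.some_inj,
    List.getLast?_cons_cons, true_and]
  tauto

lemma isGeodesic_pair {a b : V} (hab : A a b) (hne : a ≠ b) : IsGeodesic A a b [a, b] := by
  refine ⟨diwalkFrom_cons_cons.2 ⟨rfl, hab, diwalkFrom_singleton.2 ⟨rfl, rfl⟩⟩, ?_⟩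
  rintro (_ | ⟨c, _ | ⟨d, t⟩⟩) hl
  · exact absurd hl diwalkFrom_nil
  · obtain ⟨rfl, rfl⟩ := diwalkFrom_singleton.1 hl
    exact absurd rfl hne
  · simp

lemma geoConvex_iff {T : Set V} :
    GeoConvex A T ↔ ∀ u ∈ T, ∀ v ∈ T, ∀ l, IsGeodesic A u v l → ∀ w ∈ l, w ∈ T := by
  simp only [GeoConvex, geoInterval, union_eq_left, ofPred_subset]
  exact ⟨fun h u hu v hv l hl w hw => h w ⟨u, hu, v, hv, l, hl, hw⟩,
    fun h w ⟨u, hu, v, hv, l, hl, hw⟩ => h u hu v hv l hl w hw⟩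

lemma isHullSet_iff {S : Set V} :
    IsHullSet A S ↔ ∀ T, S ⊆ T → GeoConvex A T → T = univ := by
  simp only [IsHullSet, geoHull, sInter_eq_univ, mem_ofPred_eq, and_imp]

lemma isHullSet_univ : IsHullSet A univ :=
  isHullSet_iff.2 fun _ h _ => univ_subset_iff.1 h

lemma hullNumber_le_of_injective {W : Type*} [Finite V] {B : W → W → Prop} (f : V → W)
    (hf : f.Injective) (hhull : ∀ S, IsHullSet A S → IsHullSet B (f '' S)) :
    hullNumber B ≤ hullNumber A := by
  obtain ⟨S, hS, hcard, hSA⟩ : hullNumber A ∈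
      {n | ∃ S : Set V, S.Finite ∧ S.ncard = n ∧ IsHullSet A S} :=
    Nat.sInf_mem ⟨_, univ, finite_univ, rfl, isHullSet_univ⟩
  exact Nat.sInf_le ⟨f '' S, hS.image f, by rw [ncard_image_of_injective S hf, hcard],
    hhull S hSA⟩

end Geodesic

namespace oC4

variable {G : SimpleGraph V}

lemma not_inl_inl {a b : V} : ¬ oC4 G (Sum.inl a) (Sum.inl b) := id

lemma not_inr_inr {p q : {p : V × V // G.Adj p.1 p.2}} :
    ¬ oC4 G (Sum.inr p) (Sum.inr q) := id

open Classical in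
/-- The vertex `v_{a,b}`; the junk value `v_a` for non-adjacent `a, b` never occurs on a walk. -/
noncomputable def mid (G : SimpleGraph V) (a b : V) : oC4V G :=
  if h : G.Adj a b then Sum.inr ⟨(a, b), h⟩ else Sum.inl a

lemma mid_of_adj {a b : V} (h : G.Adj a b) : mid G a b = Sum.inr ⟨(a, b), h⟩ :=
  dif_pos h

variable (G) in
noncomputable def liftWalk : List V → List (oC4V G)
  | [] => []
  | [a] => [Sum.inl a]
  | a :: b :: t => Sum.inl a :: mid G a b :: liftWalk (b :: t)

lemma liftWalk_cons (a : V) (t : List V) : ∃ r, liftWalk G (a :: t) = Sum.inl a :: r := by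
  cases t <;> exact ⟨_, rfl⟩

lemma length_liftWalk : ∀ l : List V, (liftWalk G l).length = 2 * l.length - 1
  | [] | [_] => rfl
  | a :: b :: t => by
    simp only [liftWalk, List.length_cons, length_liftWalk (b :: t)]
    omega

lemma inl_mem_liftWalk : ∀ {l : List V} {w : V}, w ∈ l → Sum.inl w ∈ liftWalk G l
  | [_], _, hw => by simpa [liftWalk] using hw
  | a :: b :: t, w, hw => by
    rcases List.mem_cons.1 hw with rfl | hw
    · exact List.mem_cons_self
    · exact List.mem_cons_of_mem _ (List.mem_cons_of_mem _ (inl_mem_liftWalk hw))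

lemma diwalkFrom_liftWalk :
    ∀ {u v : V} {l : List V}, DiwalkFrom G.Adj u v l →
      DiwalkFrom (oC4 G) (Sum.inl u) (Sum.inl v) (liftWalk G l)
  | _, _, [], h => absurd h diwalkFrom_nil
  | _, _, [_], h => by
    obtain ⟨rfl, rfl⟩ := diwalkFrom_singleton.1 h
    exact diwalkFrom_singleton.2 ⟨rfl, rfl⟩
  | _, _, a :: b :: t, h => by
    obtain ⟨rfl, hab, ht⟩ := diwalkFrom_cons_cons.1 h
    obtain ⟨r, hr⟩ := liftWalk_cons (G := G) b t
    have ih := diwalkFrom_liftWalk ht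
    rw [hr] at ih
    rw [liftWalk, hr, mid_of_adj hab]
    exact diwalkFrom_cons_cons.2 ⟨rfl, rfl, diwalkFrom_cons_cons.2 ⟨rfl, rfl, ih⟩⟩

/-- Arcs of `G→C4` alternate between original and subdivision vertices, so every directed walk
between original vertices is a lifted walk of `G`. -/
lemma exists_liftWalk_eq :
    ∀ {u v : V} {l : List (oC4V G)}, DiwalkFrom (oC4 G) (Sum.inl u) (Sum.inl v) l →
      ∃ m, DiwalkFrom G.Adj u v m ∧ liftWalk G m = l
  | _, _, [], h => absurd h diwalkFrom_nil
  | _, _, [_], h => by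
    obtain ⟨rfl, h⟩ := diwalkFrom_singleton.1 h
    obtain rfl := Sum.inl_injective h
    exact ⟨[_], diwalkFrom_singleton.2 ⟨rfl, rfl⟩, rfl⟩
  | _, _, _ :: Sum.inl _ :: _, h => by
    obtain ⟨rfl, hub, -⟩ := diwalkFrom_cons_cons.1 h
    exact absurd hub not_inl_inl
  | _, _, [_, Sum.inr _], h => by
    simpa using (diwalkFrom_singleton.1 (diwalkFrom_cons_cons.1 h).2.2).2
  | _, _, _ :: Sum.inr _ :: Sum.inr _ :: _, h =>
    absurd (diwalkFrom_cons_cons.1 (diwalkFrom_cons_cons.1 h).2.2).2.1 not_inr_inr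
  | u, _, _ :: Sum.inr ⟨(a, b), hab⟩ :: Sum.inl c :: t, h => by
    obtain ⟨rfl, rfl, hp⟩ := diwalkFrom_cons_cons.1 h
    obtain ⟨-, rfl, hc⟩ := diwalkFrom_cons_cons.1 hp
    obtain ⟨_ | ⟨d, m⟩, hm, hml⟩ := exists_liftWalk_eq hc
    · exact absurd hm diwalkFrom_nil
    obtain rfl : d = c := Option.some_inj.1 hm.2.1
    refine ⟨u :: d :: m, diwalkFrom_cons_cons.2 ⟨rfl, hab, hm⟩, ?_⟩
    rw [liftWalk, hml, mid_of_adj hab]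

lemma isGeodesic_liftWalk {u v : V} {m : List V} (h : IsGeodesic G.Adj u v m) :
    IsGeodesic (oC4 G) (Sum.inl u) (Sum.inl v) (liftWalk G m) := by
  refine ⟨diwalkFrom_liftWalk h.1, fun l hl => ?_⟩
  obtain ⟨m', hm', rfl⟩ := exists_liftWalk_eq hl
  have := h.2 m' hm'
  rw [length_liftWalk, length_liftWalk]
  omega

lemma geoConvex_preimage_inl {T : Set (oC4V G)} (hT : GeoConvex (oC4 G) T) :
    GeoConvex G.Adj (Sum.inl ⁻¹' T) :=
  geoConvex_iff.2 fun _ hu _ hv _ hl _ hw =>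
    geoConvex_iff.1 hT _ hu _ hv _ (isGeodesic_liftWalk hl) _ (inl_mem_liftWalk hw)

lemma eq_univ_of_range_inl_subset {T : Set (oC4V G)} (hT : GeoConvex (oC4 G) T)
    (hinl : range Sum.inl ⊆ T) : T = univ := by
  refine eq_univ_of_forall fun
    | .inl a => hinl (mem_range_self a)
    | .inr ⟨(a, b), hab⟩ => ?_
  have hgeod := isGeodesic_liftWalk (isGeodesic_pair hab hab.ne)
  rw [liftWalk, liftWalk, mid_of_adj hab] at hgeod
  exact geoConvex_iff.1 hT _ (hinl (mem_range_self a)) _ (hinl (mem_range_self b)) _ hgeod _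
    (by simp)

lemma isHullSet_image_inl {S : Set V} (hS : IsHullSet G.Adj S) :
    IsHullSet (oC4 G) (Sum.inl '' S) := by
  refine isHullSet_iff.2 fun T hST hT => eq_univ_of_range_inl_subset hT ?_
  exact preimage_eq_univ_iff.1
    (isHullSet_iff.1 hS _ (image_subset_iff.1 hST) (geoConvex_preimage_inl hT))

end oC4

/-- every hull set of `G` is a hull set of `G→C4`;
hence `ohn(G→C4) ≤ hn(G)`. -/
theorem stmt_7 [Fintype V] (G : SimpleGraph V) :
    (∀ S : Set V, IsHullSet G.Adj S → IsHullSet (oC4 G) (Sum.inl '' S)) ∧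
    hullNumber (oC4 G) ≤ hullNumber G.Adj :=
  ⟨fun _ => oC4.isHullSet_image_inl,
    hullNumber_le_of_injective Sum.inl Sum.inl_injective fun _ => oC4.isHullSet_image_inl⟩
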